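/- If r ≠ 4, then ⟨r̄⟩ = 0 and ⟨n⟩ ≠ 0 for every integer n with 1 ≤ n < r̄; that is, r̄ is the minimal positive integer n satisfying ⟨n⟩ = 0. -/

import Mathlib

/-- The root of unity `q = e^{2π√−1/r}`. -/
noncomputable def qc (r : ℕ) : ℂ := Complex.exp (2 * Real.pi * Complex.I / r)

/-- The super quantum integer `⟨n⟩ = Σ_{i=0}^{n−1} (−1)^{n+1+i} q^{n−1−2i}`. -/
noncomputable def sInt (r : ℕ) (n : ℕ) : ℂ :=
  ∑ i ∈ Finset.range n, (-1 : ℂ) ^ (n + 1 + i) * qc r ^ ((n : ℤ) - 1 - 2 * (i : ℤ))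

/-- `r̄ = 2r` if `r` is odd, `r` if `r ≡ 2 (mod 4)`, `r/2` if `r ≡ 0 (mod 8)`,
and `r/4` if `r ≡ 4 (mod 8)`. -/
def rbar (r : ℕ) : ℕ :=
  if r % 2 = 1 then 2 * r
  else if r % 4 = 2 then r
  else if r % 8 = 0 then r / 2
  else r / 4

lemma qc_ne_zero (r : ℕ) : qc r ≠ 0 := Complex.exp_ne_zero _

lemma sInt_eq (r n : ℕ) :
    sInt r n = ((-1 : ℂ) ^ (n + 1) * qc r ^ ((n : ℤ) - 1)) *
      ∑ i ∈ Finset.range n, (-(qc r ^ (-2 : ℤ))) ^ i := by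
  rw [sInt, Finset.mul_sum]
  refine Finset.sum_congr rfl fun i _ => ?_
  have hq := qc_ne_zero r
  rw [pow_add, neg_pow (qc r ^ (-2:ℤ)) i, ← zpow_natCast (qc r ^ (-2:ℤ)) i, ← zpow_mul,
    show (n:ℤ) - 1 - 2*(i:ℤ) = ((n:ℤ) - 1) + (-2)*(i:ℤ) by ring, zpow_add₀ hq]
  ring

lemma zeta_eq (r : ℕ) (hr : 3 ≤ r) :
    -(qc r ^ (-2 : ℤ)) = Complex.exp (Real.pi * Complex.I * ((r:ℂ) - 4) / r) := by
  have hr0 : (r:ℂ) ≠ 0 := Nat.cast_ne_zero.mpr (by omega)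
  have h : (Real.pi : ℂ) * Complex.I * ((r:ℂ) - 4) / r
      = Real.pi * Complex.I + ((-2 : ℤ) : ℂ) * (2 * Real.pi * Complex.I / r) := by
    field_simp; ring
  rw [qc, ← Complex.exp_int_mul, h, Complex.exp_add, Complex.exp_pi_mul_I, neg_one_mul]

lemma zeta_pow_eq_one_iff (r : ℕ) (hr : 3 ≤ r) (n : ℕ) :
    (-(qc r ^ (-2 : ℤ))) ^ n = 1 ↔ (2 * (r:ℤ)) ∣ (n:ℤ) * ((r:ℤ) - 4) := by
  have hr0 : (r:ℂ) ≠ 0 := Nat.cast_ne_zero.mpr (by omega)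
  have hpi : (Real.pi : ℂ) ≠ 0 := by exact_mod_cast Real.pi_ne_zero
  have hpiI : (Real.pi : ℂ) * Complex.I ≠ 0 := mul_ne_zero hpi Complex.I_ne_zero
  rw [zeta_eq r hr, ← Complex.exp_nat_mul, Complex.exp_eq_one_iff]
  constructor
  · rintro ⟨k, hk⟩
    refine ⟨k, ?_⟩
    have key : (Real.pi : ℂ) * Complex.I * ((n:ℂ) * ((r:ℂ) - 4)) =
        (Real.pi : ℂ) * Complex.I * ((2 * (r:ℂ)) * k) := by
      field_simp at hk
      linear_combination (Real.pi : ℂ) * Complex.I * hk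
    have key2 := mul_left_cancel₀ hpiI key
    exact_mod_cast key2
  · rintro ⟨k, hk⟩
    refine ⟨k, ?_⟩
    have hk' : (n:ℂ) * ((r:ℂ) - 4) = 2 * (r:ℂ) * k := by exact_mod_cast hk
    field_simp
    linear_combination hk'

lemma zeta_ne_one (r : ℕ) (hr : 3 ≤ r) (hne : r ≠ 4) : -(qc r ^ (-2 : ℤ)) ≠ 1 := by
  intro h
  have h1 : (-(qc r ^ (-2 : ℤ))) ^ 1 = 1 := by rw [pow_one]; exact h
  obtain ⟨c, hc⟩ := (zeta_pow_eq_one_iff r hr 1).mp h1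
  have hr' : (3:ℤ) ≤ r := by exact_mod_cast hr
  have hne' : (r:ℤ) ≠ 4 := by exact_mod_cast fun h => hne (by exact_mod_cast h)
  push_cast at hc
  rcases (by omega : c = 0 ∨ 1 ≤ c ∨ c ≤ -1) with h0 | h0 | h0
  · subst h0; simp at hc; omega
  · have := mul_le_mul_of_nonneg_left h0 (show (0:ℤ) ≤ 2 * r by omega)
    linarith
  · have := mul_le_mul_of_nonneg_left h0 (show (0:ℤ) ≤ 2 * r by omega)
    linarith
lemma dvd_bridge (r n : ℕ) : (2 * (r:ℤ)) ∣ (n:ℤ) * ((r:ℤ) - 4) ↔ 2 * r ∣ n * (r + 4) := by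
  have h1 : (2 * (r:ℤ)) ∣ (n:ℤ) * ((r:ℤ) - 4) ↔ (2 * (r:ℤ)) ∣ (n:ℤ) * ((r:ℤ) + 4) := by
    constructor
    · intro h
      have : (n:ℤ) * ((r:ℤ) + 4) = (2 * (r:ℤ)) * n - (n:ℤ) * ((r:ℤ) - 4) := by ring
      rw [this]; exact dvd_sub (dvd_mul_right _ _) h
    · intro h
      have : (n:ℤ) * ((r:ℤ) - 4) = (2 * (r:ℤ)) * n - (n:ℤ) * ((r:ℤ) + 4) := by ring
      rw [this]; exact dvd_sub (dvd_mul_right _ _) h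
  rw [h1]
  constructor
  · intro h; exact_mod_cast h
  · intro h; exact_mod_cast h

lemma odd_dvd_eight {d : ℕ} (h2 : ¬ 2 ∣ d) (h8 : d ∣ 8) : d = 1 := by
  have hle := Nat.le_of_dvd (by norm_num) h8
  interval_cases d <;> omega

lemma NT (r : ℕ) (hr : 3 ≤ r) (n : ℕ) : 2 * r ∣ n * (r + 4) ↔ rbar r ∣ n := by
  unfold rbar
  split_ifs with h1 h2 h3
  · -- r odd
    obtain ⟨k, rfl⟩ : ∃ k, r = 2 * k + 1 := ⟨r / 2, by omega⟩
    have cop : Nat.Coprime (2 * (2 * k + 1)) (2 * k + 1 + 4) := by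
      have ga := Nat.gcd_dvd_left (2 * (2 * k + 1)) (2 * k + 1 + 4)
      have gb := Nat.gcd_dvd_right (2 * (2 * k + 1)) (2 * k + 1 + 4)
      have h8 : Nat.gcd (2 * (2 * k + 1)) (2 * k + 1 + 4) ∣ 8 := by
        have := Nat.dvd_sub (gb.mul_left 2) ga
        have e : 2 * (2 * k + 1 + 4) - 2 * (2 * k + 1) = 8 := by omega
        rwa [e] at this
      refine odd_dvd_eight (fun hc => ?_) h8
      have := hc.trans gb; omega
    constructor
    · intro h; exact cop.dvd_of_dvd_mul_right h
    · intro h; exact h.mul_right _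
  · -- r ≡ 2 mod 4
    obtain ⟨k, rfl⟩ : ∃ k, r = 4 * k + 2 := ⟨r / 4, by omega⟩
    have cop : Nat.Coprime (4 * k + 2) (2 * k + 3) := by
      have ga := Nat.gcd_dvd_left (4 * k + 2) (2 * k + 3)
      have gb := Nat.gcd_dvd_right (4 * k + 2) (2 * k + 3)
      have h8 : Nat.gcd (4 * k + 2) (2 * k + 3) ∣ 8 := by
        have := Nat.dvd_sub (gb.mul_left 2) ga
        have e : 2 * (2 * k + 3) - (4 * k + 2) = 4 := by omega
        rw [e] at this
        exact this.trans (by norm_num)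
      refine odd_dvd_eight (fun hc => ?_) h8
      have := hc.trans gb; omega
    constructor
    · intro h
      have h' : 2 * (4 * k + 2) ∣ 2 * (n * (2 * k + 3)) := by
        have e : n * (4 * k + 2 + 4) = 2 * (n * (2 * k + 3)) := by ring
        rwa [e] at h
      exact cop.dvd_of_dvd_mul_right ((Nat.mul_dvd_mul_iff_left (by norm_num : 0 < 2)).mp h')
    · rintro ⟨m, rfl⟩
      exact ⟨m * (2 * k + 3), by ring⟩
  · -- r ≡ 0 mod 8
    obtain ⟨k, rfl⟩ : ∃ k, r = 8 * k := ⟨r / 8, by omega⟩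
    have e2 : 8 * k / 2 = 4 * k := by omega
    rw [e2]
    have cop : Nat.Coprime (4 * k) (2 * k + 1) := by
      have ga := Nat.gcd_dvd_left (4 * k) (2 * k + 1)
      have gb := Nat.gcd_dvd_right (4 * k) (2 * k + 1)
      have h8 : Nat.gcd (4 * k) (2 * k + 1) ∣ 8 := by
        have := Nat.dvd_sub (gb.mul_left 2) ga
        have e : 2 * (2 * k + 1) - 4 * k = 2 := by omega
        rw [e] at this
        exact this.trans (by norm_num)
      refine odd_dvd_eight (fun hc => ?_) h8
      have := hc.trans gb; omega
    constructor
    · intro h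
      have h' : 4 * (4 * k) ∣ 4 * (n * (2 * k + 1)) := by
        have e : n * (8 * k + 4) = 4 * (n * (2 * k + 1)) := by ring
        have e' : 2 * (8 * k) = 4 * (4 * k) := by ring
        rw [e'] at h; rwa [e] at h
      exact cop.dvd_of_dvd_mul_right ((Nat.mul_dvd_mul_iff_left (by norm_num : 0 < 4)).mp h')
    · rintro ⟨m, rfl⟩
      exact ⟨m * (2 * k + 1), by ring⟩
  · -- r ≡ 4 mod 8
    obtain ⟨k, rfl⟩ : ∃ k, r = 8 * k + 4 := ⟨r / 8, by omega⟩
    have e2 : (8 * k + 4) / 4 = 2 * k + 1 := by omega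
    rw [e2]
    have cop : Nat.Coprime (2 * k + 1) (k + 1) := by
      have ga := Nat.gcd_dvd_left (2 * k + 1) (k + 1)
      have gb := Nat.gcd_dvd_right (2 * k + 1) (k + 1)
      have h1' : Nat.gcd (2 * k + 1) (k + 1) ∣ 1 := by
        have := Nat.dvd_sub (gb.mul_left 2) ga
        have e : 2 * (k + 1) - (2 * k + 1) = 1 := by omega
        rwa [e] at this
      exact Nat.dvd_one.mp h1'
    constructor
    · intro h
      have h' : 8 * (2 * k + 1) ∣ 8 * (n * (k + 1)) := by
        have e : n * (8 * k + 4 + 4) = 8 * (n * (k + 1)) := by ring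
        have e' : 2 * (8 * k + 4) = 8 * (2 * k + 1) := by ring
        rw [e'] at h; rwa [e] at h
      exact cop.dvd_of_dvd_mul_right ((Nat.mul_dvd_mul_iff_left (by norm_num : 0 < 8)).mp h')
    · rintro ⟨m, rfl⟩
      exact ⟨m * (k + 1), by ring⟩

lemma sInt_eq_zero_iff (r : ℕ) (hr : 3 ≤ r) (hne : r ≠ 4) (n : ℕ) :
    sInt r n = 0 ↔ rbar r ∣ n := by
  have hζ := zeta_ne_one r hr hne
  have hζ1 : -(qc r ^ (-2 : ℤ)) - 1 ≠ 0 := sub_ne_zero.mpr hζ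
  rw [sInt_eq, geom_sum_eq hζ, mul_eq_zero, div_eq_zero_iff]
  have hpre : (-1 : ℂ) ^ (n + 1) * qc r ^ ((n : ℤ) - 1) ≠ 0 :=
    mul_ne_zero (pow_ne_zero _ (by norm_num)) (zpow_ne_zero _ (qc_ne_zero r))
  simp only [hpre, hζ1, or_false, false_or, sub_eq_zero]
  rw [zeta_pow_eq_one_iff r hr, dvd_bridge, NT r hr]

/-- If `r ≠ 4`, then `⟨r̄⟩ = 0` and `⟨n⟩ ≠ 0` for `1 ≤ n < r̄`; i.e. `r̄` is the minimal
positive integer with `⟨r̄⟩ = 0`. -/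
theorem statement7 (r : ℕ) (hr : 3 ≤ r) (hne : r ≠ 4) :
    sInt r (rbar r) = 0 ∧ ∀ n : ℕ, 1 ≤ n → n < rbar r → sInt r n ≠ 0 := by
  refine ⟨(sInt_eq_zero_iff r hr hne _).mpr dvd_rfl, fun n h1 h2 h0 => ?_⟩
  have := Nat.le_of_dvd (by omega) ((sInt_eq_zero_iff r hr hne n).mp h0)
  omega
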